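/- arXiv:2212.10439 — 3 statements merged into one kernel-verified Lean document; each statement's English description precedes it below -/
import Mathlib

section
/- Performance difference lemma: for any two policies π, π', any transition kernel p, and any initial distribution ρ over states, J_ρ(π,p) − J_ρ(π',p) = (1/(1−γ)) Σ_{s,a} d^{π,p}_ρ(s) π_{sa} (q^{π',p}_{sa} − v^{π',p}_s). -/
/-- Performance difference lemma:
`J_ρ(π,p) − J_ρ(π',p) = (1/(1−γ)) Σ_{s,a} d^{π,p}_ρ(s) π_{sa} (q^{π',p}_{sa} − v^{π',p}_s)`,
where the occupancy measure `d` is given by its discounted series definition. -/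
theorem stmt_8 {S A : Type*} [Fintype S] [Fintype A] [DecidableEq S]
    (γ : ℝ) (hγ : γ ∈ Set.Ioo (0 : ℝ) 1)
    (pol pol' : S → A → ℝ) (p : S → A → S → ℝ) (c : S → A → S → ℝ) (ρ : S → ℝ)
    (hpol : ∀ s a, 0 ≤ pol s a) (hpol1 : ∀ s, ∑ a, pol s a = 1)
    (hpol' : ∀ s a, 0 ≤ pol' s a) (hpol'1 : ∀ s, ∑ a, pol' s a = 1)
    (hp : ∀ s a s', 0 ≤ p s a s') (hp1 : ∀ s a, ∑ s', p s a s' = 1)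
    (hρ : ∀ s, 0 ≤ ρ s) (hρ1 : ∑ s, ρ s = 1)
    (v v' : S → ℝ) (q' : S → A → ℝ)
    (hv : ∀ s, v s = ∑ a, pol s a * ∑ s', p s a s' * (c s a s' + γ * v s'))
    (hq' : ∀ s a, q' s a = ∑ s', p s a s' * (c s a s' + γ * v' s'))
    (hv' : ∀ s, v' s = ∑ a, pol' s a * q' s a)
    (d : S → ℝ)
    (hd : ∀ s', d s' = (1 - γ) * ∑ s, ρ s *
      ∑' t : ℕ, γ ^ t * ((Matrix.of fun s₁ s₂ => ∑ a, pol s₁ a * p s₁ a s₂) ^ t) s s') :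
    (∑ s, ρ s * v s) - (∑ s, ρ s * v' s) =
      (1 / (1 - γ)) * ∑ s, ∑ a, d s * pol s a * (q' s a - v' s) := by
  obtain ⟨hγ0, hγ1⟩ := hγ
  have hγ0' : (0:ℝ) ≤ γ := le_of_lt hγ0
  cases isEmpty_or_nonempty S with
  | inl hS => simp
  | inr hS =>
  set P : Matrix S S ℝ := Matrix.of fun s₁ s₂ => ∑ a, pol s₁ a * p s₁ a s₂ with hPdef
  have hPapp : ∀ s s', P s s' = ∑ a, pol s a * p s a s' := fun s s' => rfl
  have hP0 : ∀ s s', 0 ≤ P s s' := fun s s' =>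
    Finset.sum_nonneg fun a _ => mul_nonneg (hpol s a) (hp s a s')
  have hP1 : ∀ s, ∑ s', P s s' = 1 := by
    intro s
    have : ∑ s', P s s' = ∑ a, ∑ s', pol s a * p s a s' := Finset.sum_comm
    rw [this]
    simp only [← Finset.mul_sum, hp1, mul_one, hpol1]
  have hpow0 : ∀ n s s', 0 ≤ (P ^ n) s s' := by
    intro n
    induction n with
    | zero => intro s s'; by_cases h : s = s' <;> simp [Matrix.one_apply, h]
    | succ n ih =>
      intro s s'
      rw [pow_succ, Matrix.mul_apply]
      exact Finset.sum_nonneg fun k _ => mul_nonneg (ih s k) (hP0 k s')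
  have hpow1 : ∀ n s, ∑ s', (P ^ n) s s' = 1 := by
    intro n
    induction n with
    | zero => intro s; simp [Matrix.one_apply]
    | succ n ih =>
      intro s
      simp only [pow_succ, Matrix.mul_apply]
      rw [Finset.sum_comm]
      simp only [← Finset.mul_sum, hP1, mul_one, ih]
  have hpowle : ∀ n s s', (P ^ n) s s' ≤ 1 := fun n s s' => by
    rw [← hpow1 n s]
    exact Finset.single_le_sum (fun k _ => hpow0 n s k) (Finset.mem_univ s')
  have hsumm : ∀ s s', Summable (fun t => γ ^ t * (P ^ t) s s') := fun s s' =>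
    Summable.of_nonneg_of_le
      (fun t => mul_nonneg (pow_nonneg hγ0' t) (hpow0 t s s'))
      (fun t => mul_le_of_le_one_right (pow_nonneg hγ0' t) (hpowle t s s'))
      (summable_geometric_of_lt_one hγ0' hγ1)
  set f : S → ℝ := fun s => (∑ a, pol s a * q' s a) - v' s with hf
  have hsumm2 : ∀ s s', Summable (fun t => γ ^ t * ((P ^ t) s s' * f s')) := by
    intro s s'
    have := (hsumm s s').mul_right (f s')
    simpa [mul_assoc] using this
  have hgsum : ∀ s, Summable (fun t => γ ^ t * ∑ s', (P ^ t) s s' * f s') := by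
    intro s
    have he : ∀ t, γ ^ t * ∑ s', (P ^ t) s s' * f s' = ∑ s', γ ^ t * ((P ^ t) s s' * f s') :=
      fun t => Finset.mul_sum _ _ _
    rw [funext he]
    exact summable_sum fun s' _ => hsumm2 s s'
  set g : S → ℝ := fun s => ∑' t : ℕ, γ ^ t * ∑ s', (P ^ t) s s' * f s' with hg
  -- Bellman-type recursion for v - v'
  have key : ∀ s, v s - v' s = f s + γ * ∑ s', P s s' * (v s' - v' s') := by
    intro s
    have h1 : v s = ∑ a, pol s a * (q' s a + ∑ s', p s a s' * (γ * (v s' - v' s'))) := by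
      rw [hv s]
      refine Finset.sum_congr rfl fun a _ => ?_
      rw [hq' s a, ← Finset.sum_add_distrib]
      refine congrArg _ (Finset.sum_congr rfl fun s' _ => ?_)
      ring
    have h2 : γ * ∑ s', P s s' * (v s' - v' s')
        = ∑ a, pol s a * ∑ s', p s a s' * (γ * (v s' - v' s')) := by
      simp only [hPapp, Finset.sum_mul, Finset.mul_sum]
      rw [Finset.sum_comm]
      exact Finset.sum_congr rfl fun a _ => Finset.sum_congr rfl fun s' _ => by ring
    rw [h1, h2]
    simp only [mul_add, Finset.sum_add_distrib, hf]
    ring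
  -- recursion for g
  have hgrec : ∀ s, g s = f s + γ * ∑ s', P s s' * g s' := by
    intro s
    have h0 : g s = (γ ^ 0 * ∑ s', (P ^ 0) s s' * f s')
        + ∑' t : ℕ, γ ^ (t + 1) * ∑ s', (P ^ (t + 1)) s s' * f s' := Summable.tsum_eq_zero_add (hgsum s)
    have e0 : γ ^ 0 * ∑ s', (P ^ 0) s s' * f s' = f s := by
      simp [Matrix.one_apply]
    have e1 : ∀ t, γ ^ (t + 1) * ∑ s', (P ^ (t + 1)) s s' * f s'
        = ∑ k, γ * (P s k * (γ ^ t * ∑ s', (P ^ t) k s' * f s')) := by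
      intro t
      simp only [pow_succ', Matrix.mul_apply, Finset.sum_mul, Finset.mul_sum]
      rw [Finset.sum_comm]
      exact Finset.sum_congr rfl fun k _ => Finset.sum_congr rfl fun s' _ => by ring
    have e2 : ∑' t : ℕ, γ ^ (t + 1) * ∑ s', (P ^ (t + 1)) s s' * f s'
        = γ * ∑ k, P s k * g k := by
      simp only [e1]
      rw [Summable.tsum_finsetSum (fun k _ => ((hgsum k).mul_left (P s k)).mul_left γ)]
      rw [Finset.mul_sum]
      exact Finset.sum_congr rfl fun k _ => by rw [tsum_mul_left, tsum_mul_left]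
    rw [h0, e0, e2]
  -- v - v' = g  via contraction
  have hvg : ∀ s, v s - v' s = g s := by
    set w : S → ℝ := fun s => v s - v' s - g s with hw
    have hwrec : ∀ s, w s = γ * ∑ s', P s s' * w s' := by
      intro s
      have h1 : w s = γ * ∑ s', P s s' * (v s' - v' s') - γ * ∑ s', P s s' * g s' := by
        rw [show w s = (v s - v' s) - g s from rfl, key s, hgrec s]; ring
      rw [h1, ← mul_sub, ← Finset.sum_sub_distrib]
      refine congrArg _ (Finset.sum_congr rfl fun s' _ => ?_)
      ring
    obtain ⟨s0, _, hs0⟩ := Finset.exists_max_image Finset.univ (fun s => |w s|)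
      Finset.univ_nonempty
    have hb : |w s0| ≤ γ * |w s0| := by
      calc |w s0| = γ * |∑ s', P s0 s' * w s'| := by
            rw [hwrec s0, abs_mul, abs_of_nonneg hγ0']
        _ ≤ γ * ∑ s', |P s0 s' * w s'| := by
            gcongr
            exact Finset.abs_sum_le_sum_abs _ _
        _ ≤ γ * ∑ s', P s0 s' * |w s0| := by
            gcongr with s' _
            rw [abs_mul, abs_of_nonneg (hP0 s0 s')]
            exact mul_le_mul_of_nonneg_left (hs0 s' (Finset.mem_univ _)) (hP0 s0 s')
        _ = γ * |w s0| := by rw [← Finset.sum_mul, hP1 s0, one_mul]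
    have hzero : |w s0| = 0 := by nlinarith [abs_nonneg (w s0)]
    intro s
    have : |w s| ≤ 0 := hzero ▸ hs0 s (Finset.mem_univ _)
    have hws : w s = 0 := abs_eq_zero.mp (le_antisymm this (abs_nonneg _))
    have : v s - v' s - g s = 0 := hws
    linarith
  -- inner sum over actions
  have hinner : ∀ s, ∑ a, d s * pol s a * (q' s a - v' s) = d s * f s := by
    intro s
    have h1 : ∑ a, d s * pol s a * (q' s a - v' s)
        = (∑ a, d s * (pol s a * q' s a)) - ∑ a, d s * v' s * pol s a := by
      rw [← Finset.sum_sub_distrib]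
      exact Finset.sum_congr rfl fun a _ => by ring
    rw [h1, ← Finset.mul_sum, ← Finset.mul_sum, hpol1 s, mul_one]
    simp only [hf]
    ring
  have hswap : ∀ s, ∑ s', (∑' t : ℕ, γ ^ t * (P ^ t) s s') * f s' = g s := by
    intro s
    have h1 : ∀ s', (∑' t : ℕ, γ ^ t * (P ^ t) s s') * f s'
        = ∑' t : ℕ, γ ^ t * ((P ^ t) s s' * f s') := by
      intro s'
      rw [← tsum_mul_right]
      exact tsum_congr fun t => by ring
    simp only [h1]
    rw [← Summable.tsum_finsetSum (fun s' _ => hsumm2 s s')]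
    exact tsum_congr fun t => by
      rw [Finset.mul_sum]
  have h1γ : (1:ℝ) - γ ≠ 0 := by linarith
  have hL : (∑ s, ρ s * v s) - (∑ s, ρ s * v' s) = ∑ s, ρ s * g s := by
    rw [← Finset.sum_sub_distrib]
    exact Finset.sum_congr rfl fun s _ => by rw [← mul_sub, hvg s]
  rw [hL]
  symm
  calc (1 / (1 - γ)) * ∑ s, ∑ a, d s * pol s a * (q' s a - v' s)
      = (1 / (1 - γ)) * ∑ s', d s' * f s' := by
        rw [Finset.sum_congr rfl fun s _ => hinner s]
    _ = (1 / (1 - γ)) * ((1 - γ) * ∑ s', (∑ s, ρ s * ∑' t : ℕ, γ ^ t * (P ^ t) s s') * f s') := by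
        congr 1
        rw [Finset.mul_sum]
        exact Finset.sum_congr rfl fun s' _ => by rw [hd s']; ring
    _ = ∑ s', (∑ s, ρ s * ∑' t : ℕ, γ ^ t * (P ^ t) s s') * f s' := by
        field_simp
    _ = ∑ s, ρ s * ∑ s', (∑' t : ℕ, γ ^ t * (P ^ t) s s') * f s' := by
        simp only [Finset.sum_mul]
        rw [Finset.sum_comm]
        refine Finset.sum_congr rfl fun s _ => ?_
        rw [Finset.mul_sum]
        exact Finset.sum_congr rfl fun s' _ => by ring
    _ = ∑ s, ρ s * g s := Finset.sum_congr rfl fun s _ => by rw [hswap s]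
end

section
/- For any policy π and transition kernels p, p': J_ρ(π,p) − J_ρ(π,p') = (1/(1−γ)) Σ_s d^{π,p'}_ρ(s) Σ_a π_{sa} Σ_{s'} (p_{sas'} − p'_{sas'}) (c_{sas'} + γ v^{π,p}_{s'}). -/
/-! With `P'` the state transition matrix of `π` under `p'`, the difference `w = v - v'` of the
two value functions solves `w = g + γ P' w`, where `g` is the one-step gap inside the sum on the
right. Since `P'` is row-stochastic, `‖γ P'‖∞ ≤ γ < 1`, so `w = ∑ₜ (γ P')ᵗ g` is a Neumann series,
and pairing it with `ρ` produces exactly `d' / (1 - γ)`. -/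
open Matrix

attribute [local instance] Matrix.linftyOpNormedRing Matrix.linftyOpNormedAlgebra

section Neumann

variable {n : Type*} [Fintype n] [DecidableEq n]

theorem Matrix.linfty_opNorm_le_one_of_mem_rowStochastic {M : Matrix n n ℝ}
    (hM : M ∈ rowStochastic ℝ n) : ‖M‖ ≤ 1 := by
  rw [linfty_opNorm_def, NNReal.coe_le_one, Finset.sup_le_iff]
  intro i _
  rw [← NNReal.coe_le_one, NNReal.coe_sum]
  simp only [coe_nnnorm, Real.norm_of_nonneg (nonneg_of_mem_rowStochastic hM),
    sum_row_of_mem_rowStochastic hM i, le_refl]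

theorem Matrix.eq_tsum_pow_mulVec_of_eq_add_mulVec {B : Matrix n n ℝ} (hB : ‖B‖ < 1)
    {w g : n → ℝ} (h : w = g + B *ᵥ w) : w = (∑' t, B ^ t) *ᵥ g := by
  have hg : g = (1 - B) *ᵥ w := by
    rw [sub_mulVec, one_mulVec]; exact (sub_eq_of_eq_add h).symm
  rw [hg, mulVec_mulVec, show (∑' t, B ^ t) * (1 - B) = 1 from geom_series_mul_neg B hB,
    one_mulVec]

theorem Matrix.tsum_pow_apply {B : Matrix n n ℝ} (hB : ‖B‖ < 1) (i j : n) :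
    (∑' t, B ^ t) i j = ∑' t, (B ^ t) i j := by
  have hsum : HasSum (fun t => B ^ t) (∑' t, B ^ t) :=
    (summable_geometric_of_norm_lt_one hB).hasSum
  exact (Pi.hasSum.1 (Pi.hasSum.1 hsum i) j).tsum_eq.symm

end Neumann

section MDP

variable {S A : Type*} [Fintype S] [Fintype A]

def policyTransition (pol : S → A → ℝ) (p : S → A → S → ℝ) : Matrix S S ℝ :=
  Matrix.of fun s s' => ∑ a, pol s a * p s a s'

theorem policyTransition_mem_rowStochastic [DecidableEq S] {pol : S → A → ℝ}
    {p : S → A → S → ℝ} (hpol : ∀ s a, 0 ≤ pol s a) (hpol1 : ∀ s, ∑ a, pol s a = 1)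
    (hp : ∀ s a s', 0 ≤ p s a s') (hp1 : ∀ s a, ∑ s', p s a s' = 1) :
    policyTransition pol p ∈ rowStochastic ℝ S := by
  refine mem_rowStochastic_iff_sum.2 ⟨fun s s' => ?_, fun s => ?_⟩
  · exact Finset.sum_nonneg fun a _ => mul_nonneg (hpol s a) (hp s a s')
  · simp only [policyTransition, of_apply]
    rw [Finset.sum_comm]
    simp only [← Finset.mul_sum, hp1, mul_one, hpol1]

theorem sub_eq_add_smul_policyTransition_mulVec {γ : ℝ} {pol : S → A → ℝ}
    {p p' c : S → A → S → ℝ} {v v' : S → ℝ}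
    (hv : ∀ s, v s = ∑ a, pol s a * ∑ s', p s a s' * (c s a s' + γ * v s'))
    (hv' : ∀ s, v' s = ∑ a, pol s a * ∑ s', p' s a s' * (c s a s' + γ * v' s')) :
    v - v' = (fun s => ∑ a, pol s a * ∑ s', (p s a s' - p' s a s') * (c s a s' + γ * v s'))
      + (γ • policyTransition pol p') *ᵥ (v - v') := by
  funext s
  simp only [Pi.add_apply, Pi.sub_apply, smul_mulVec, Pi.smul_apply, mulVec, dotProduct,
    policyTransition, of_apply, smul_eq_mul, Finset.sum_mul, Finset.mul_sum]
  rw [hv s, hv' s, Finset.sum_comm (γ := S) (α := A), ← Finset.sum_sub_distrib,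
    ← Finset.sum_add_distrib]
  refine Finset.sum_congr rfl fun a _ => ?_
  rw [← mul_sub, ← Finset.sum_sub_distrib, Finset.mul_sum, ← Finset.sum_add_distrib]
  refine Finset.sum_congr rfl fun s' _ => ?_
  ring

end MDP

theorem stmt_9_general {S A : Type*} [Fintype S] [Fintype A] [DecidableEq S]
    (γ : ℝ) (hγ : γ ∈ Set.Ioo (0 : ℝ) 1)
    (pol : S → A → ℝ) (p p' : S → A → S → ℝ) (c : S → A → S → ℝ) (ρ : S → ℝ)
    (hpol : ∀ s a, 0 ≤ pol s a) (hpol1 : ∀ s, ∑ a, pol s a = 1)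
    (hp' : ∀ s a s', 0 ≤ p' s a s') (hp'1 : ∀ s a, ∑ s', p' s a s' = 1)
    (v v' : S → ℝ)
    (hv : ∀ s, v s = ∑ a, pol s a * ∑ s', p s a s' * (c s a s' + γ * v s'))
    (hv' : ∀ s, v' s = ∑ a, pol s a * ∑ s', p' s a s' * (c s a s' + γ * v' s'))
    (d' : S → ℝ)
    (hd' : ∀ s', d' s' = (1 - γ) * ∑ s, ρ s *
      ∑' t : ℕ, γ ^ t * ((Matrix.of fun s₁ s₂ => ∑ a, pol s₁ a * p' s₁ a s₂) ^ t) s s') :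
    (∑ s, ρ s * v s) - (∑ s, ρ s * v' s) =
      (1 / (1 - γ)) * ∑ s, d' s * ∑ a, pol s a *
        ∑ s', (p s a s' - p' s a s') * (c s a s' + γ * v s') := by
  obtain ⟨hγ0, hγ1⟩ := hγ
  set M := policyTransition pol p'
  have hB : ‖γ • M‖ < 1 := calc
    ‖γ • M‖ ≤ ‖γ‖ * ‖M‖ := norm_smul_le γ M
    _ ≤ γ * 1 := by
      rw [Real.norm_of_nonneg hγ0.le]
      exact mul_le_mul_of_nonneg_left (linfty_opNorm_le_one_of_mem_rowStochastic
        (policyTransition_mem_rowStochastic hpol hpol1 hp' hp'1)) hγ0.le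
    _ < 1 := by linarith
  set N := ∑' t, (γ • M) ^ t
  set g : S → ℝ := fun s => ∑ a, pol s a * ∑ s', (p s a s' - p' s a s') * (c s a s' + γ * v s')
  have hd : d' = (1 - γ) • (ρ ᵥ* N) := funext fun s' => by
    simp only [hd', Pi.smul_apply, smul_eq_mul, vecMul, dotProduct, N]
    simp only [tsum_pow_apply hB]
    simp only [smul_pow, Matrix.smul_apply, smul_eq_mul]
    rfl
  have hw : v - v' = N *ᵥ g :=
    eq_tsum_pow_mulVec_of_eq_add_mulVec hB (sub_eq_add_smul_policyTransition_mulVec hv hv')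
  calc (∑ s, ρ s * v s) - (∑ s, ρ s * v' s) = ρ ⬝ᵥ (v - v') := by
        simp only [dotProduct, Pi.sub_apply, mul_sub, Finset.sum_sub_distrib]
    _ = (ρ ᵥ* N) ⬝ᵥ g := by rw [hw, dotProduct_mulVec]
    _ = 1 / (1 - γ) * (d' ⬝ᵥ g) := by
      rw [hd, smul_dotProduct, smul_eq_mul, ← mul_assoc, one_div_mul_cancel (by linarith),
        one_mul]

/-- Difference of returns under two transition kernels `p`, `p'` with the same policy:
`J_ρ(π,p) − J_ρ(π,p') = (1/(1−γ)) Σ_s d^{π,p'}_ρ(s) Σ_a π_{sa} Σ_{s'}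
  (p_{sas'} − p'_{sas'})(c_{sas'} + γ v^{π,p}_{s'})`. -/
theorem stmt_9 {S A : Type*} [Fintype S] [Fintype A] [DecidableEq S]
    (γ : ℝ) (hγ : γ ∈ Set.Ioo (0 : ℝ) 1)
    (pol : S → A → ℝ) (p p' : S → A → S → ℝ) (c : S → A → S → ℝ) (ρ : S → ℝ)
    (hpol : ∀ s a, 0 ≤ pol s a) (hpol1 : ∀ s, ∑ a, pol s a = 1)
    (hp : ∀ s a s', 0 ≤ p s a s') (hp1 : ∀ s a, ∑ s', p s a s' = 1)
    (hp' : ∀ s a s', 0 ≤ p' s a s') (hp'1 : ∀ s a, ∑ s', p' s a s' = 1)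
    (hρ : ∀ s, 0 ≤ ρ s) (hρ1 : ∑ s, ρ s = 1)
    (v v' : S → ℝ)
    (hv : ∀ s, v s = ∑ a, pol s a * ∑ s', p s a s' * (c s a s' + γ * v s'))
    (hv' : ∀ s, v' s = ∑ a, pol s a * ∑ s', p' s a s' * (c s a s' + γ * v' s'))
    (d' : S → ℝ)
    (hd' : ∀ s', d' s' = (1 - γ) * ∑ s, ρ s *
      ∑' t : ℕ, γ ^ t * ((Matrix.of fun s₁ s₂ => ∑ a, pol s₁ a * p' s₁ a s₂) ^ t) s s') :
    (∑ s, ρ s * v s) - (∑ s, ρ s * v' s) =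
      (1 / (1 - γ)) * ∑ s, d' s * ∑ a, pol s a *
        ∑ s', (p s a s' - p' s a s') * (c s a s' + γ * v s') :=
  stmt_9_general γ hγ pol p p' c ρ hpol hpol1 hp' hp'1 v v' hv hv' d' hd'
end

section
/- For an RMDP with R-contamination ambiguity set, the robust optimal Bellman operator satisfies (T^r v)_s = (T v)_s + Rγ max_{s'} v_{s'}, where T is the optimal Bellman operator of the ordinary MDP with nominal kernel p̄ and discount factor γ(1−R). In particular, if v is nonnegative, the two operators differ only by a state-independent constant Rγ‖v‖_∞. -/
private lemma mySupEqMax15 {S : Type*} [Fintype S] [Nonempty S] (v : S → ℝ) :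
    ∃ s0, v s0 = ⨆ s', v s' ∧ ∀ s, v s ≤ v s0 := by
  obtain ⟨s0, hs0⟩ := Finite.exists_max v
  refine ⟨s0, le_antisymm (le_ciSup (Finite.bddAbove_range v) s0) (ciSup_le hs0), hs0⟩

/-- For an RMDP with an R-contamination ambiguity set, the robust optimal Bellman operator
equals the optimal Bellman operator of the ordinary MDP with nominal kernel and reduced
discount `γ(1−R)`, shifted by the state-independent constant `Rγ max_{s'} v_{s'}`
(`= Rγ‖v‖_∞` when `v ≥ 0`). -/
theorem stmt_15 {S A : Type*} [Fintype S] [Fintype A] [Nonempty S] [Nonempty A]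
    (γ R : ℝ) (hγ : γ ∈ Set.Ioo (0 : ℝ) 1) (hR : R ∈ Set.Icc (0 : ℝ) 1)
    (c : S → A → ℝ) (pbar : S → A → S → ℝ)
    (hpbar : ∀ s a s', 0 ≤ pbar s a s') (hpbar1 : ∀ s a, ∑ s', pbar s a s' = 1)
    (v : S → ℝ) (hv : ∀ s, 0 ≤ v s) :
    ∀ s, (⨅ a, sSup ((fun pv => c s a + γ * ∑ s', pv s' * v s') ''
          {pv : S → ℝ | ∃ q : S → ℝ, (∀ s', 0 ≤ q s') ∧ (∑ s', q s' = 1) ∧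
            pv = fun s' => (1 - R) * pbar s a s' + R * q s'}))
      = (⨅ a, c s a + γ * (1 - R) * ∑ s', pbar s a s' * v s') + R * γ * ⨆ s', v s' := by
  intro s
  classical
  obtain ⟨s0, hs0, hmax⟩ := mySupEqMax15 v
  have key : ∀ a, sSup ((fun pv => c s a + γ * ∑ s', pv s' * v s') ''
          {pv : S → ℝ | ∃ q : S → ℝ, (∀ s', 0 ≤ q s') ∧ (∑ s', q s' = 1) ∧
            pv = fun s' => (1 - R) * pbar s a s' + R * q s'})
      = (c s a + γ * (1 - R) * ∑ s', pbar s a s' * v s') + R * γ * ⨆ s', v s' := by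
    intro a
    have hub : ∀ x ∈ ((fun pv => c s a + γ * ∑ s', pv s' * v s') ''
          {pv : S → ℝ | ∃ q : S → ℝ, (∀ s', 0 ≤ q s') ∧ (∑ s', q s' = 1) ∧
            pv = fun s' => (1 - R) * pbar s a s' + R * q s'}),
        x ≤ (c s a + γ * (1 - R) * ∑ s', pbar s a s' * v s') + R * γ * ⨆ s', v s' := by
      rintro x ⟨pv, ⟨q, hq0, hq1, rfl⟩, rfl⟩
      have hsum : ∑ s', ((1 - R) * pbar s a s' + R * q s') * v s'
          = (1 - R) * ∑ s', pbar s a s' * v s' + R * ∑ s', q s' * v s' := by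
        rw [Finset.mul_sum, Finset.mul_sum, ← Finset.sum_add_distrib]
        apply Finset.sum_congr rfl; intros; ring
      have hqv : ∑ s', q s' * v s' ≤ ⨆ s', v s' := by
        rw [← hs0]
        calc ∑ s', q s' * v s' ≤ ∑ s', q s' * v s0 := by
              apply Finset.sum_le_sum; intro i _
              exact mul_le_mul_of_nonneg_left (hmax i) (hq0 i)
            _ = v s0 := by rw [← Finset.sum_mul, hq1, one_mul]
      simp only [hsum]
      have : γ * (R * ∑ s', q s' * v s') ≤ R * γ * ⨆ s', v s' := by
        rw [show R * γ * (⨆ s', v s') = γ * (R * ⨆ s', v s') by ring]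
        exact mul_le_mul_of_nonneg_left
          (mul_le_mul_of_nonneg_left hqv hR.1) hγ.1.le
      nlinarith [this]
    have hmem : (c s a + γ * ((1 - R) * ∑ s', pbar s a s' * v s' + R * v s0))
        ∈ ((fun pv => c s a + γ * ∑ s', pv s' * v s') ''
        {pv : S → ℝ | ∃ q : S → ℝ, (∀ s', 0 ≤ q s') ∧ (∑ s', q s' = 1) ∧
          pv = fun s' => (1 - R) * pbar s a s' + R * q s'}) := by
      refine ⟨_, ⟨(fun s' => if s' = s0 then 1 else 0), ?_, ?_, rfl⟩, ?_⟩
      · intro s'; dsimp only; split <;> norm_num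
      · simp
      · simp only
        congr 1
        rw [show ∑ s', ((1 - R) * pbar s a s' + R * if s' = s0 then 1 else 0) * v s'
            = (1 - R) * ∑ s', pbar s a s' * v s'
              + R * ∑ s', (if s' = s0 then 1 else 0) * v s' by
          rw [Finset.mul_sum, Finset.mul_sum, ← Finset.sum_add_distrib]
          apply Finset.sum_congr rfl; intros; ring]
        congr 2
        simp
    apply le_antisymm
    · exact csSup_le ⟨_, hmem⟩ hub
    · calc (c s a + γ * (1 - R) * ∑ s', pbar s a s' * v s') + R * γ * ⨆ s', v s'
          = c s a + γ * ((1 - R) * ∑ s', pbar s a s' * v s' + R * v s0) := by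
            rw [← hs0]; ring
        _ ≤ _ := le_csSup ⟨_, hub⟩ hmem
  simp only [key]
  rw [← ciInf_add (Finite.bddBelow_range _)]
end
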